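/- For a finite group G there exists a finite subset P = {β₁, …, β_t} of B = Perm(G) such that: (i) the map β_i ↦ β_i λ(G) β_i⁻¹ is a bijection from P onto S(G) ∩ R(G); (ii) the left cosets β₁Hol(G), …, β_tHol(G) are pairwise distinct, and the right cosets Hol(G)β₁, …, Hol(G)β_t are pairwise distinct with ⋃_{i=1}^t β_i Hol(G) = ⋃_{i=1}^t Hol(G) β_i; (iii) there is a permutation σ of {1,…,t} with β_i⁻¹ λ(G) β_i = β_{σ(i)} λ(G) β_{σ(i)}⁻¹ for every i. -/

import Mathlib

open Equiv Pointwise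

/-- A subgroup `N ≤ Perm X` is regular if for all `x y : X` there is exactly one
element of `N` sending `x` to `y`. -/
def IsRegularSubgroup {X : Type*} (N : Subgroup (Equiv.Perm X)) : Prop :=
  ∀ x y : X, ∃! η : N, (η : Equiv.Perm X) x = y

/-- The image `λ(G)` of the left regular representation `λ : G → Perm G`. -/
def lamG (G : Type*) [Group G] : Subgroup (Equiv.Perm G) :=
  (MulAction.toPermHom G G).range

/-- The holomorph `Hol(G) = Norm_B(λ(G))`. -/
def Hol (G : Type*) [Group G] : Subgroup (Equiv.Perm G) :=
  Subgroup.normalizer (lamG G : Set (Equiv.Perm G))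

/-- `H(G)`: regular subgroups isomorphic to `G` whose normalizer is `Hol(G)`. -/
def HClass (G : Type*) [Group G] : Set (Subgroup (Equiv.Perm G)) :=
  {N | IsRegularSubgroup N ∧ Nonempty (N ≃* G) ∧ Subgroup.normalizer (N : Set (Equiv.Perm G)) = Hol G}

/-- `S(G)`: regular subgroups isomorphic to `G` contained in `Hol(G)`. -/
def SClass (G : Type*) [Group G] : Set (Subgroup (Equiv.Perm G)) :=
  {N | IsRegularSubgroup N ∧ Nonempty (N ≃* G) ∧ N ≤ Hol G}

/-- `R(G)`: regular subgroups isomorphic to `G` normalized by `λ(G)`. -/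
def RClass (G : Type*) [Group G] : Set (Subgroup (Equiv.Perm G)) :=
  {N | IsRegularSubgroup N ∧ Nonempty (N ≃* G) ∧ lamG G ≤ Subgroup.normalizer (N : Set (Equiv.Perm G))}

/-- `Q(G)`: members of `S(G) ∩ R(G)` normalized by every member of `S(G) ∩ R(G)`. -/
def QClass (G : Type*) [Group G] : Set (Subgroup (Equiv.Perm G)) :=
  {M ∈ SClass G ∩ RClass G | ∀ N ∈ SClass G ∩ RClass G, N ≤ Subgroup.normalizer (M : Set (Equiv.Perm G))}

/-- Conjugate of a subgroup: `b N b⁻¹`. -/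
def conjSub {H : Type*} [Group H] (b : H) (N : Subgroup H) : Subgroup H :=
  Subgroup.map (MulAut.conj b).toMonoidHom N

/-! Every regular subgroup isomorphic to `G` is a conjugate `b λ(G) b⁻¹`, and such a conjugate lies
in `S(G) ∩ R(G)` exactly when `b λ(G) b⁻¹ ≤ Hol(G)` and `b⁻¹ λ(G) b ≤ Hol(G)`. So the set `X` of
such `b` is closed under inversion and, as `Hol(G)` normalizes `λ(G)`, it is a union of left cosets
`b Hol(G)`, each giving a single conjugate; with `X⁻¹ = X` it is also a union of right cosets.
By Hall's marriage theorem a subgroup of a finite group has a common system of representatives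
for its left and right cosets; those lying in `X` are the `β i`, and `σ` comes from `X⁻¹ = X`. -/

namespace Subgroup

variable {B : Type*} [Group B] (H : Subgroup B)

theorem natCard_preimage_mk (A : Finset (B ⧸ H)) :
    Nat.card (QuotientGroup.mk ⁻¹' (A : Set (B ⧸ H))) = Nat.card H * A.card := by
  rw [Nat.card_congr (QuotientGroup.preimageMkEquivSubgroupProdSet H _), Nat.card_prod,
    Nat.card_coe_set_eq, Set.ncard_coe_finset]

-- `H x ↦ x⁻¹ H` identifies right cosets with left cosets, so `range a` is a right transversal too.
theorem exists_common_transversal [Finite B] :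
    ∃ a : B ⧸ H → B, (∀ q, (a q : B ⧸ H) = q) ∧
      Function.Bijective fun q => (((a q)⁻¹ : B) : B ⧸ H) := by
  classical
  have := Fintype.ofFinite B
  let t : B ⧸ H → Finset (B ⧸ H) := fun q =>
    (QuotientGroup.mk ⁻¹' {q} : Set B).toFinset.image fun x => ((x⁻¹ : B) : B ⧸ H)
  -- The `|s| * |H|` elements of the cosets in `s` lie in the cosets matched to `s`.
  have hall : ∀ s : Finset (B ⧸ H), s.card ≤ (s.biUnion t).card := by
    intro s
    have hsub : QuotientGroup.mk ⁻¹' (s : Set (B ⧸ H)) ⊆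
        (QuotientGroup.mk ⁻¹' ((s.biUnion t : Finset (B ⧸ H)) : Set (B ⧸ H)))⁻¹ := by
      intro x hx
      simp only [Set.mem_inv, Set.mem_preimage, Finset.mem_coe, Finset.mem_biUnion]
      exact ⟨x, hx, Finset.mem_image.2 ⟨x, by simp, rfl⟩⟩
    have := Nat.card_mono (Set.toFinite _) hsub
    rw [Set.natCard_inv, natCard_preimage_mk, natCard_preimage_mk] at this
    exact Nat.le_of_mul_le_mul_left this Nat.card_pos
  obtain ⟨f, hf, hft⟩ := (Finset.all_card_le_biUnion_card_iff_exists_injective t).1 hall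
  have hex : ∀ q, ∃ x : B, (x : B ⧸ H) = q ∧ ((x⁻¹ : B) : B ⧸ H) = f q := fun q => by
    simpa [t] using hft q
  choose a ha hfa using hex
  refine ⟨a, ha, ?_⟩
  simp only [hfa]
  exact Finite.injective_iff_bijective.1 hf

variable {H}

theorem exists_fin_transversal_of_mul_mem [Finite B] {X : Set B}
    (hXr : ∀ x ∈ X, ∀ h ∈ H, x * h ∈ X) (hXl : ∀ x ∈ X, ∀ h ∈ H, h * x ∈ X) :
    ∃ (t : ℕ) (β : Fin t → B), (∀ i, β i ∈ X) ∧
      (∀ x ∈ X, ∃! i, (β i)⁻¹ * x ∈ H) ∧ (∀ x ∈ X, ∃! i, x * (β i)⁻¹ ∈ H) := by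
  obtain ⟨a, ha, hbij⟩ := exists_common_transversal H
  have hleft : ∀ q x, (a q)⁻¹ * x ∈ H ↔ q = x := fun q x => by
    rw [← QuotientGroup.eq, ha]
  have hright : ∀ q x, x * (a q)⁻¹ ∈ H ↔ (((a q)⁻¹ : B) : B ⧸ H) = ((x⁻¹ : B) : B ⧸ H) := by
    intro q x
    rw [eq_comm, QuotientGroup.eq, inv_inv]
  let Y := {q : B ⧸ H // a q ∈ X}
  let e := Finite.equivFin Y
  refine ⟨_, fun i => a (e.symm i), fun i => (e.symm i).2, fun x hx => ?_, fun x hx => ?_⟩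
  · refine (e.symm.existsUnique_congr_right (q := fun k : Y => (a k)⁻¹ * x ∈ H)).2 ?_
    have hmem : a x ∈ X := by
      simpa using hXr x hx _ (inv_mem ((hleft x x).2 rfl))
    exact ⟨⟨x, hmem⟩, (hleft x x).2 rfl, fun k hk => Subtype.ext ((hleft k x).1 hk)⟩
  · refine (e.symm.existsUnique_congr_right (q := fun k : Y => x * (a k)⁻¹ ∈ H)).2 ?_
    obtain ⟨q, hq⟩ := hbij.2 ((x⁻¹ : B) : B ⧸ H)
    have hmem : a q ∈ X := by
      simpa using hXl x hx _ (inv_mem ((hright q x).2 hq))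
    exact ⟨⟨q, hmem⟩, (hright q x).2 hq,
      fun k hk => Subtype.ext (hbij.1 (((hright k x).1 hk).trans hq.symm))⟩

section Consequences

variable {X : Set B} {ι : Type*} {β : ι → B}

theorem mem_singleton_mul_iff {a x : B} : x ∈ ({a} : Set B) * (H : Set B) ↔ a⁻¹ * x ∈ H := by
  rw [Set.singleton_mul, Set.image_mul_left]
  rfl

theorem mem_mul_singleton_iff {a x : B} : x ∈ (H : Set B) * ({a} : Set B) ↔ x * a⁻¹ ∈ H := by
  rw [Set.mul_singleton, Set.image_mul_right]
  rfl

theorem mul_mem_left_of_mul_mem_right (hXr : ∀ x ∈ X, ∀ h ∈ H, x * h ∈ X)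
    (hXinv : ∀ x ∈ X, x⁻¹ ∈ X) : ∀ x ∈ X, ∀ h ∈ H, h * x ∈ X := fun x hx h hh => by
  simpa using hXinv _ (hXr _ (hXinv x hx) _ (inv_mem hh))

variable (hβ : ∀ i, β i ∈ X)
include hβ

theorem eq_of_inv_mul_mem (hleft : ∀ x ∈ X, ∃! i, (β i)⁻¹ * x ∈ H) {i j : ι}
    (h : (β j)⁻¹ * β i ∈ H) : i = j :=
  (hleft _ (hβ i)).unique (by simp [H.one_mem]) h

theorem eq_of_mul_inv_mem (hright : ∀ x ∈ X, ∃! i, x * (β i)⁻¹ ∈ H) {i j : ι}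
    (h : β i * (β j)⁻¹ ∈ H) : i = j :=
  (hright _ (hβ i)).unique (by simp [H.one_mem]) h

theorem injective_singleton_mul (hleft : ∀ x ∈ X, ∃! i, (β i)⁻¹ * x ∈ H) :
    Function.Injective fun i => ({β i} : Set B) * (H : Set B) := by
  intro i j (hij : {β i} * (H : Set B) = {β j} * H)
  have : β i ∈ ({β j} : Set B) * (H : Set B) := by
    rw [← hij]
    exact mem_singleton_mul_iff.2 (by simp [H.one_mem])
  exact eq_of_inv_mul_mem hβ hleft (mem_singleton_mul_iff.1 this)

theorem injective_mul_singleton (hright : ∀ x ∈ X, ∃! i, x * (β i)⁻¹ ∈ H) :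
    Function.Injective fun i => (H : Set B) * ({β i} : Set B) := by
  intro i j (hij : (H : Set B) * {β i} = H * {β j})
  have : β i ∈ (H : Set B) * ({β j} : Set B) := by
    rw [← hij]
    exact mem_mul_singleton_iff.2 (by simp [H.one_mem])
  exact eq_of_mul_inv_mem hβ hright (mem_mul_singleton_iff.1 this)

theorem iUnion_singleton_mul_eq (hXr : ∀ x ∈ X, ∀ h ∈ H, x * h ∈ X)
    (hleft : ∀ x ∈ X, ∃! i, (β i)⁻¹ * x ∈ H) : ⋃ i, ({β i} : Set B) * (H : Set B) = X := by
  ext x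
  simp only [Set.mem_iUnion, mem_singleton_mul_iff]
  refine ⟨fun ⟨i, hi⟩ => by simpa using hXr _ (hβ i) _ hi, fun hx => (hleft x hx).exists⟩

theorem iUnion_mul_singleton_eq (hXl : ∀ x ∈ X, ∀ h ∈ H, h * x ∈ X)
    (hright : ∀ x ∈ X, ∃! i, x * (β i)⁻¹ ∈ H) : ⋃ i, (H : Set B) * ({β i} : Set B) = X := by
  ext x
  simp only [Set.mem_iUnion, mem_mul_singleton_iff]
  refine ⟨fun ⟨i, hi⟩ => by simpa using hXl _ (hβ i) _ hi, fun hx => (hright x hx).exists⟩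

theorem exists_perm_inv_mul_inv_mem [Finite ι] (hXinv : ∀ x ∈ X, x⁻¹ ∈ X)
    (hleft : ∀ x ∈ X, ∃! i, (β i)⁻¹ * x ∈ H) (hright : ∀ x ∈ X, ∃! i, x * (β i)⁻¹ ∈ H) :
    ∃ σ : Perm ι, ∀ i, (β (σ i))⁻¹ * (β i)⁻¹ ∈ H := by
  choose σ hσ using fun i => (hleft _ (hXinv _ (hβ i))).exists
  have hσinj : Function.Injective σ := fun i j hij => by
    have := mul_mem (inv_mem (hσ i)) (hij ▸ hσ j)
    exact eq_of_mul_inv_mem hβ hright (by simpa [mul_assoc] using this)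
  exact ⟨Equiv.ofBijective σ (Finite.injective_iff_bijective.1 hσinj), hσ⟩

end Consequences

end Subgroup

section conjSub

variable {G : Type*} [Group G] {b c x : G} {N M : Subgroup G}

theorem mem_conjSub : x ∈ conjSub b N ↔ b⁻¹ * x * b ∈ N := by
  rw [conjSub, Subgroup.mem_map_equiv, MulAut.conj_symm_apply]

theorem conjSub_conjSub : conjSub b (conjSub c N) = conjSub (b * c) N := by
  ext x
  simp [mem_conjSub, mul_assoc]

theorem conjSub_one : conjSub 1 N = N := by
  ext x
  simp [mem_conjSub]

theorem conjSub_le_iff : conjSub b N ≤ M ↔ N ≤ conjSub b⁻¹ M := by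
  refine ⟨fun h x hx => ?_, fun h x hx => ?_⟩
  · rw [mem_conjSub, inv_inv]
    exact h (by simpa [mem_conjSub, mul_assoc] using hx)
  · simpa [mem_conjSub, mul_assoc] using h (mem_conjSub.1 hx)

theorem normalizer_conjSub :
    Subgroup.normalizer (conjSub b N : Set G) = conjSub b (Subgroup.normalizer (N : Set G)) :=
  (Subgroup.map_equiv_normalizer_eq N (MulAut.conj b)).symm

theorem conjSub_eq_self_iff : conjSub b N = N ↔ b ∈ Subgroup.normalizer (N : Set G) :=
  Subgroup.mem_normalizer_iff_map_conj_eq.symm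

theorem conjSub_eq_conjSub_iff :
    conjSub b N = conjSub c N ↔ c⁻¹ * b ∈ Subgroup.normalizer (N : Set G) := by
  rw [← conjSub_eq_self_iff, ← conjSub_conjSub]
  refine ⟨fun h => by rw [h, conjSub_conjSub, inv_mul_cancel, conjSub_one], fun h => ?_⟩
  simpa [conjSub_conjSub, conjSub_one] using congrArg (conjSub c) h

noncomputable def conjSubEquiv (b : G) (N : Subgroup G) : N ≃* conjSub b N :=
  N.equivMapOfInjective _ (MulAut.conj b).injective

theorem coe_conjSubEquiv_apply (η : N) : (conjSubEquiv b N η : G) = b * η * b⁻¹ := rfl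

end conjSub

theorem isRegularSubgroup_conjSub {X : Type*} {N : Subgroup (Perm X)} (hN : IsRegularSubgroup N)
    (b : Perm X) : IsRegularSubgroup (conjSub b N) := by
  intro x y
  refine ((conjSubEquiv b N).toEquiv.existsUnique_congr fun η => ?_).1 (hN (b⁻¹ x) (b⁻¹ y))
  simp [coe_conjSubEquiv_apply, Equiv.eq_symm_apply]

section Holomorph

variable {G : Type*} [Group G]

theorem isRegularSubgroup_lamG : IsRegularSubgroup (lamG G) := by
  intro x y
  refine ⟨⟨MulAction.toPermHom G G (y * x⁻¹), _, rfl⟩, by simp, ?_⟩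
  rintro ⟨_, g, rfl⟩ (rfl : g * x = _)
  simp

theorem exists_conjSub_lamG_eq {N : Subgroup (Perm G)}
    (hN : IsRegularSubgroup N) (φ : N ≃* G) : ∃ b : Perm G, conjSub b (lamG G) = N := by
  have hbij : Function.Bijective fun g => ((φ.symm g : N) : Perm G) 1 :=
    ((Function.bijective_iff_existsUnique _).2 (hN 1)).comp φ.symm.bijective
  set b := Equiv.ofBijective _ hbij
  have hb : (MulAut.conj b).toMonoidHom.comp (MulAction.toPermHom G G) =
      N.subtype.comp φ.symm.toMonoidHom := by
    ext g x
    simp [b, Perm.mul_apply, Equiv.ofBijective_apply_symm_apply _ hbij]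
  refine ⟨b, ?_⟩
  rw [conjSub, lamG, MonoidHom.map_range, hb]
  ext η
  exact ⟨by rintro ⟨g, rfl⟩; exact (φ.symm g).2, fun h => ⟨φ ⟨η, h⟩, by simp⟩⟩

theorem conjSub_lamG_mem_iff (b : Perm G) :
    conjSub b (lamG G) ∈ SClass G ∩ RClass G ↔
      conjSub b (lamG G) ≤ Hol G ∧ conjSub b⁻¹ (lamG G) ≤ Hol G := by
  have hreg := isRegularSubgroup_conjSub isRegularSubgroup_lamG b
  have hiso : Nonempty (conjSub b (lamG G) ≃* G) :=
    ⟨(conjSubEquiv b _).symm.trans (MonoidHom.ofInjective MulAction.toPerm_injective).symm⟩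
  have hR : lamG G ≤ Subgroup.normalizer (conjSub b (lamG G) : Set (Perm G)) ↔
      conjSub b⁻¹ (lamG G) ≤ Hol G := by
    rw [normalizer_conjSub, conjSub_le_iff, inv_inv, Hol]
  simp only [SClass, RClass, Set.mem_inter_iff, Set.mem_ofPred_eq, hR]
  tauto

end Holomorph

/-- There is a finite set `P = {β₁, …, β_t}` parameterizing `S(G) ∩ R(G)` which is a
simultaneous set of left and right coset representatives of `Hol(G)`, and which is
inv-closed up to a permutation `σ` of the indices. -/
theorem exists_parameterizing_transversal (G : Type*) [Group G] [Finite G] :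
    ∃ (t : ℕ) (β : Fin t → Equiv.Perm G),
      -- (i) `i ↦ β_i λ(G) β_i⁻¹` is a bijection from the indices onto `S(G) ∩ R(G)`
      (∀ i, conjSub (β i) (lamG G) ∈ SClass G ∩ RClass G) ∧
      (Function.Injective fun i => conjSub (β i) (lamG G)) ∧
      (∀ N ∈ SClass G ∩ RClass G, ∃ i, conjSub (β i) (lamG G) = N) ∧
      -- (ii) the left cosets are pairwise distinct, the right cosets are pairwise
      -- distinct, and the unions of the left and right cosets coincide
      (Function.Injective fun i => ({β i} : Set (Equiv.Perm G)) * (Hol G : Set (Equiv.Perm G))) ∧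
      (Function.Injective fun i => (Hol G : Set (Equiv.Perm G)) * ({β i} : Set (Equiv.Perm G))) ∧
      (⋃ i, ({β i} : Set (Equiv.Perm G)) * (Hol G : Set (Equiv.Perm G)))
        = (⋃ i, (Hol G : Set (Equiv.Perm G)) * ({β i} : Set (Equiv.Perm G))) ∧
      -- (iii) a permutation `σ` with `β_i⁻¹ λ(G) β_i = β_{σ(i)} λ(G) β_{σ(i)}⁻¹`
      (∃ σ : Equiv.Perm (Fin t),
        ∀ i, conjSub (β i)⁻¹ (lamG G) = conjSub (β (σ i)) (lamG G)) := by
  set X : Set (Perm G) := {b | conjSub b (lamG G) ∈ SClass G ∩ RClass G}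
  have hXinv : ∀ x ∈ X, x⁻¹ ∈ X := fun x hx =>
    (conjSub_lamG_mem_iff _).2 (by rw [inv_inv]; exact ((conjSub_lamG_mem_iff x).1 hx).symm)
  have hXr : ∀ x ∈ X, ∀ h ∈ Hol G, x * h ∈ X := fun x hx h hh => by
    have : conjSub (x * h) (lamG G) = conjSub x (lamG G) :=
      conjSub_eq_conjSub_iff.2 (by rwa [inv_mul_cancel_left])
    simpa [X, this] using hx
  have hXl := Subgroup.mul_mem_left_of_mul_mem_right hXr hXinv
  obtain ⟨t, β, hβ, hleft, hright⟩ := Subgroup.exists_fin_transversal_of_mul_mem hXr hXl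
  obtain ⟨σ, hσ⟩ := Subgroup.exists_perm_inv_mul_inv_mem hβ hXinv hleft hright
  refine ⟨t, β, hβ, fun i j hij => Subgroup.eq_of_inv_mul_mem hβ hleft
      (conjSub_eq_conjSub_iff.1 hij), fun N hN => ?_, Subgroup.injective_singleton_mul hβ hleft,
    Subgroup.injective_mul_singleton hβ hright, ?_, σ, fun i => conjSub_eq_conjSub_iff.2 (hσ i)⟩
  · obtain ⟨b, rfl⟩ := exists_conjSub_lamG_eq hN.1.1 hN.1.2.1.some
    obtain ⟨i, hi, -⟩ := hleft b hN
    exact ⟨i, (conjSub_eq_conjSub_iff.2 hi).symm⟩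
  · rw [Subgroup.iUnion_singleton_mul_eq hβ hXr hleft,
      Subgroup.iUnion_mul_singleton_eq hβ hXl hright]
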